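/- Let (f_r) satisfy f_{r+1} = 1/(b_r + d_r) + (d_r/b_r) f_r with f_0 ≥ 0, where b_r > 0 and d_r ≥ 0. Suppose there exists r_0 and θ ∈ (0,1) such that d_r/b_r ≤ θ for all r ≥ r_0, and Σ_{r≥0} 1/b_r < ∞. Then Σ_{r=0}^∞ f_r < ∞. -/
import Mathlib


theorem stmt_7 (b d : ℕ → ℝ) (hb : ∀ r, 0 < b r) (hd : ∀ r, 0 ≤ d r)
    (f : ℕ → ℝ) (hfnn : ∀ r, 0 ≤ f r)
    (hrec : ∀ r, f (r+1) = 1 / (b r + d r) + (d r / b r) * f r)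
    (r0 : ℕ) (θ : ℝ) (hθ : θ ∈ Set.Ioo (0:ℝ) 1) (hratio : ∀ r ≥ r0, d r / b r ≤ θ)
    (hsum : Summable (fun r => 1 / b r)) :
    Summable f := by
  obtain ⟨hθ0, hθ1⟩ := hθ
  have hbnn : ∀ r, 0 ≤ 1 / b r := fun r => le_of_lt (one_div_pos.2 (hb r))
  set S := ∑' r, 1 / b r with hS
  have hSnn : 0 ≤ S := tsum_nonneg hbnn
  set C := ∑ i ∈ Finset.range (r0 + 1), f i with hC
  have hCnn : 0 ≤ C := Finset.sum_nonneg fun i _ => hfnn i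
  have h1θ : 0 < 1 - θ := by linarith
  have key : ∀ r, r0 ≤ r → f (r + 1) ≤ 1 / b r + θ * f r := by
    intro r hr
    rw [hrec r]
    have h1 : 1 / (b r + d r) ≤ 1 / b r :=
      one_div_le_one_div_of_le (hb r) (le_add_of_nonneg_right (hd r))
    have h2 : (d r / b r) * f r ≤ θ * f r :=
      mul_le_mul_of_nonneg_right (hratio r hr) (hfnn r)
    linarith
  have main : ∀ n, ∑ i ∈ Finset.range n, f i ≤ (C + S) / (1 - θ) := by
    intro n
    rcases le_or_gt n (r0 + 1) with hn | hn
    · have h1 : ∑ i ∈ Finset.range n, f i ≤ C :=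
        Finset.sum_le_sum_of_subset_of_nonneg (Finset.range_subset_range.2 hn)
          (fun i _ _ => hfnn i)
      rw [le_div_iff₀ h1θ]
      nlinarith [Finset.sum_nonneg (fun i (_ : i ∈ Finset.range n) => hfnn i)]
    · set m := n - (r0 + 1) with hm
      have hnm : n = (r0 + 1) + m := by omega
      have hsplit : ∑ i ∈ Finset.range n, f i
          = C + ∑ i ∈ Finset.Ico (r0 + 1) n, f i := by
        rw [hC, Finset.sum_range_add_sum_Ico f (le_of_lt hn)]
      have hIco : ∑ i ∈ Finset.Ico (r0 + 1) n, f i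
          = ∑ i ∈ Finset.range m, f ((r0 + 1) + i) := by
        rw [Finset.sum_Ico_eq_sum_range]
      have hstep : ∑ i ∈ Finset.range m, f ((r0 + 1) + i)
          ≤ ∑ i ∈ Finset.range m, (1 / b (r0 + i) + θ * f (r0 + i)) := by
        apply Finset.sum_le_sum
        intro i _
        have : (r0 + 1) + i = (r0 + i) + 1 := by omega
        rw [this]
        exact key (r0 + i) (Nat.le_add_right _ _)
      have hb_sum : ∑ i ∈ Finset.range m, 1 / b (r0 + i) ≤ S := by
        have : ∑ i ∈ Finset.range m, 1 / b (r0 + i)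
            = ∑ i ∈ Finset.Ico r0 (r0 + m), 1 / b i := by
          rw [Finset.sum_Ico_eq_sum_range]
          simp
        rw [this]
        exact Summable.sum_le_tsum _ (fun i _ => hbnn i) hsum
      have hf_sum : ∑ i ∈ Finset.range m, f (r0 + i) ≤ ∑ i ∈ Finset.range n, f i := by
        have heq : ∑ i ∈ Finset.range m, f (r0 + i)
            = ∑ i ∈ Finset.Ico r0 (r0 + m), f i := by
          rw [Finset.sum_Ico_eq_sum_range]
          simp
        rw [heq]
        apply Finset.sum_le_sum_of_subset_of_nonneg
        · intro i hi
          simp only [Finset.mem_Ico] at hi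
          simp only [Finset.mem_range]
          omega
        · exact fun i _ _ => hfnn i
      have hsum_split : ∑ i ∈ Finset.range m, (1 / b (r0 + i) + θ * f (r0 + i))
          = ∑ i ∈ Finset.range m, 1 / b (r0 + i)
            + θ * ∑ i ∈ Finset.range m, f (r0 + i) := by
        rw [Finset.sum_add_distrib, Finset.mul_sum]
      set T := ∑ i ∈ Finset.range n, f i with hT
      have hTnn : 0 ≤ T := Finset.sum_nonneg fun i _ => hfnn i
      have hbound : T ≤ C + S + θ * T := by
        have h3 : θ * ∑ i ∈ Finset.range m, f (r0 + i) ≤ θ * T :=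
          mul_le_mul_of_nonneg_left hf_sum (le_of_lt hθ0)
        calc T = C + ∑ i ∈ Finset.Ico (r0 + 1) n, f i := hsplit
          _ = C + ∑ i ∈ Finset.range m, f ((r0 + 1) + i) := by rw [hIco]
          _ ≤ C + (∑ i ∈ Finset.range m, 1 / b (r0 + i)
              + θ * ∑ i ∈ Finset.range m, f (r0 + i)) := by
              rw [← hsum_split]; linarith
          _ ≤ C + S + θ * T := by linarith
      rw [le_div_iff₀ h1θ]
      nlinarith
  exact summable_of_sum_range_le hfnn main
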